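/- The number of monotone Boolean functions of n variables, i.e. functions f : (Fin n → Bool) → Bool that are monotone with respect to the pointwise order on inputs (with false ≤ true), is at least 2^(n choose ⌊n/2⌋). -/
import Mathlib

private def supp {n : ℕ} (x : Fin n → Bool) : Finset (Fin n) :=
  Finset.filter (fun i => x i = true) Finset.univ

private def Phi {n : ℕ} (g : {A : Finset (Fin n) // A.card = n / 2} → Bool)
    (x : Fin n → Bool) : Bool :=
  decide (n / 2 < (supp x).card) ||
    (if h : (supp x).card = n / 2 then g ⟨supp x, h⟩ else false)

/-- The number of monotone Boolean functions of `n` variables (the Dedekind number)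
is at least `2 ^ (n choose ⌊n/2⌋)`. -/
theorem dedekind_lower_bound (n : ℕ) :
    2 ^ (n.choose (n / 2)) ≤
      Nat.card {f : (Fin n → Bool) → Bool //
        ∀ x y : Fin n → Bool, (∀ i, x i = true → y i = true) →
          f x = true → f y = true} := by
  have hmono : ∀ (g : {A : Finset (Fin n) // A.card = n / 2} → Bool)
      (x y : Fin n → Bool), (∀ i, x i = true → y i = true) →
      Phi g x = true → Phi g y = true := by
    intro g x y hxy hx
    have hsub : supp x ⊆ supp y := by
      intro i hi
      simp only [supp, Finset.mem_filter, Finset.mem_univ, true_and] at hi ⊢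
      exact hxy i hi
    have hcard : (supp x).card ≤ (supp y).card := Finset.card_le_card hsub
    simp only [Phi, Bool.or_eq_true, decide_eq_true_eq] at hx ⊢
    rcases hx with hx | hx
    · exact Or.inl (lt_of_lt_of_le hx hcard)
    · split at hx
      · rename_i h
        rcases lt_or_eq_of_le hcard with h2 | h2
        · exact Or.inl (h ▸ h2)
        · have heq : supp x = supp y := Finset.eq_of_subset_of_card_le hsub h2.ge
          right
          rw [dif_pos (heq ▸ h : (supp y).card = n / 2)]
          rw [show (⟨supp y, heq ▸ h⟩ : {A : Finset (Fin n) // A.card = n / 2}) = ⟨supp x, h⟩ from Subtype.ext heq.symm]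
          exact hx
      · exact absurd hx (by simp)
  set Φ : ({A : Finset (Fin n) // A.card = n / 2} → Bool) →
      {f : (Fin n → Bool) → Bool //
        ∀ x y : Fin n → Bool, (∀ i, x i = true → y i = true) →
          f x = true → f y = true} :=
    fun g => ⟨Phi g, hmono g⟩ with hΦ
  have hinj : Function.Injective Φ := by
    intro g g' h
    funext A
    have hx : Phi g (fun i => decide (i ∈ A.1)) = Phi g' (fun i => decide (i ∈ A.1)) := by
      have := congrArg Subtype.val h
      exact congrFun this _
    have hsupp : supp (fun i => decide (i ∈ A.1)) = A.1 := by
      ext i; simp [supp]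
    rw [Phi, Phi, hsupp] at hx
    rw [dif_pos A.2, dif_pos A.2, A.2] at hx
    simpa using hx
  calc 2 ^ (n.choose (n / 2))
      = Nat.card ({A : Finset (Fin n) // A.card = n / 2} → Bool) := by
        rw [Nat.card_eq_fintype_card, Fintype.card_fun, Fintype.card_bool,
          Fintype.card_finset_len, Fintype.card_fin]
    _ ≤ _ := Nat.card_le_card_of_injective Φ hinj
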